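/- arXiv:2002.10858 — 2 statements merged into one kernel-verified Lean document; each statement's English description precedes it below -/
import Mathlib

section
/- The posterior-mean estimator δ̂_opt defined by δ̂_opt(y) = (∫_Θ (δ/φ²) f(y|θ) π(θ) dθ)/(∫_Θ (1/φ²) f(y|θ) π(θ) dθ), with π(θ) = φ^{N+K−1}, is invariant: for all a > 0, b ∈ ℝ^{N+K}, c ∈ ℝ, δ̂_opt(a(y + Hb) + c·1) = a·δ̂_opt(y) + c, provided all the integrals are finite and the denominator is positive. -/
open MeasureTheory

/-- The density `f(y|θ) = φ^{-2NP} f_v((y - δ·1)/φ - Hγ)` with `θ = (φ, γ, δ)`. -/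
noncomputable def densFam (N K P : ℕ) (f_v : (Fin (2*N*P) → ℝ) → ℝ)
    (H : Matrix (Fin (2*N*P)) (Fin (N+K)) ℝ)
    (y : Fin (2*N*P) → ℝ) (θ : ℝ × (Fin (N+K) → ℝ) × ℝ) : ℝ :=
  (θ.1 ^ (2*N*P))⁻¹ *
    f_v (θ.1⁻¹ • (y - θ.2.2 • (1 : Fin (2*N*P) → ℝ)) - H.mulVec θ.2.1)

/-- The posterior-mean offset estimator
`δ̂_opt(y) = (∫ (δ/φ²) f(y|θ) π(θ) dθ)/(∫ (1/φ²) f(y|θ) π(θ) dθ)` with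
`π(θ) = φ^{N+K-1}`, integrating over `Θ = ℝ⁺ × ℝ^{N+K} × ℝ`. -/
noncomputable def deltaOpt (N K P : ℕ) (f_v : (Fin (2*N*P) → ℝ) → ℝ)
    (H : Matrix (Fin (2*N*P)) (Fin (N+K)) ℝ) (y : Fin (2*N*P) → ℝ) : ℝ :=
  (∫ θ in {θ : ℝ × (Fin (N+K) → ℝ) × ℝ | 0 < θ.1},
      θ.2.2 / θ.1^2 * densFam N K P f_v H y θ * θ.1 ^ (N+K-1)) /
  (∫ θ in {θ : ℝ × (Fin (N+K) → ℝ) × ℝ | 0 < θ.1},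
      1 / θ.1^2 * densFam N K P f_v H y θ * θ.1 ^ (N+K-1))

/-!
The substitution `T θ = (a φ, γ + φ⁻¹ b, a δ + c)` maps `Θ` onto itself and turns the posterior
of `y` into the posterior of `y' = a (y + H b) + c 1`: the argument of `f_v` is unchanged, so
`f(y' | T θ) = a^{-2NP} f(y | θ)`, while `1/φ²` and the prior `φ^{N+K-1}` only contribute powers
of `a`. The shear `γ ↦ γ + φ⁻¹ b` preserves Lebesgue measure and the scalings of `φ` and `δ`
multiply it by `a⁻²`. Hence the numerator of `δ̂_opt(y')` is a constant times
`a · num(y) + c · den(y)` and its denominator the same constant times `den(y)`.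
-/

theorem MeasureTheory.measurePreserving_prod_add_comp_fst {α G : Type*} [MeasurableSpace α]
    [MeasurableSpace G] [Add G] [MeasurableAdd₂ G] (μ : Measure α) (ν : Measure G) [SFinite μ]
    [SFinite ν] [ν.IsAddRightInvariant] {f : α → G} (hf : Measurable f) :
    MeasurePreserving (fun p : α × G => (p.1, p.2 + f p.1)) (μ.prod ν) (μ.prod ν) :=
  (MeasurePreserving.id μ).skew_product (g := fun x y => y + f x) (by fun_prop)
    (.of_forall fun x => (measurePreserving_add_right ν (f x)).map_eq)

theorem Real.map_volume_mul_left_add {a : ℝ} (ha : a ≠ 0) (c : ℝ) :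
    Measure.map (fun x => a * x + c) volume = ENNReal.ofReal |a⁻¹| • volume := by
  change Measure.map ((· + c) ∘ (a * ·)) volume = _
  rw [← Measure.map_map (measurable_add_const c) (measurable_const_mul a),
    Real.map_volume_mul_left ha, Measure.map_smul, (measurePreserving_add_right volume c).map_eq]

section ParamTransform

variable {n : ℕ}

noncomputable def paramTransform (a : ℝ) (b : Fin n → ℝ) (c : ℝ) (θ : ℝ × (Fin n → ℝ) × ℝ) :
    ℝ × (Fin n → ℝ) × ℝ :=
  (a * θ.1, θ.2.1 + θ.1⁻¹ • b, a * θ.2.2 + c)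

theorem measurable_paramTransform (a : ℝ) (b : Fin n → ℝ) (c : ℝ) :
    Measurable (paramTransform a b c) := by
  unfold paramTransform
  fun_prop

theorem map_paramTransform_volume {a : ℝ} (ha : a ≠ 0) (b : Fin n → ℝ) (c : ℝ) :
    Measure.map (paramTransform a b c) volume = ENNReal.ofReal (a ^ 2)⁻¹ • volume := by
  have hshear : MeasurePreserving
      (fun θ : ℝ × (Fin n → ℝ) × ℝ => (θ.1, θ.2 + (θ.1⁻¹ • b, (0 : ℝ)))) volume volume := by
    rw [Measure.volume_eq_prod, Measure.volume_eq_prod (Fin n → ℝ)]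
    exact measurePreserving_prod_add_comp_fst _ _
      ((measurable_inv.smul_const b).prodMk measurable_const)
  have hscale : Measure.map (Prod.map (a * ·) (Prod.map id (fun x => a * x + c)))
      (volume : Measure (ℝ × (Fin n → ℝ) × ℝ)) = ENNReal.ofReal (a ^ 2)⁻¹ • volume := by
    rw [Measure.volume_eq_prod, Measure.volume_eq_prod (Fin n → ℝ),
      ← Measure.map_prod_map _ _ (measurable_const_mul a) (by fun_prop),
      ← Measure.map_prod_map _ _ measurable_id (by fun_prop), Measure.map_id,
      Real.map_volume_mul_left ha, Real.map_volume_mul_left_add ha, Measure.prod_smul_right,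
      Measure.prod_smul_left, Measure.prod_smul_right, smul_smul,
      ← ENNReal.ofReal_mul (abs_nonneg _), ← abs_mul, ← mul_inv, ← sq,
      abs_of_nonneg (by positivity)]
  have hcomp : paramTransform a b c = Prod.map (a * ·) (Prod.map id (fun x => a * x + c)) ∘
      (fun θ : ℝ × (Fin n → ℝ) × ℝ => (θ.1, θ.2 + (θ.1⁻¹ • b, (0 : ℝ)))) := by
    ext θ <;> simp [paramTransform]
  rw [hcomp, ← Measure.map_map (by fun_prop) hshear.measurable, hshear.map_eq, hscale]

theorem preimage_paramTransform_pos {a : ℝ} (ha : 0 < a) (b : Fin n → ℝ) (c : ℝ) :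
    paramTransform a b c ⁻¹' {θ | 0 < θ.1} = {θ | 0 < θ.1} := by
  ext θ
  simp [paramTransform, mul_pos_iff_of_pos_left ha]

theorem setIntegral_pos_eq_sq_smul_comp_paramTransform {E : Type*} [NormedAddCommGroup E]
    [NormedSpace ℝ E] {a : ℝ} (ha : 0 < a) (b : Fin n → ℝ) (c : ℝ)
    {g : ℝ × (Fin n → ℝ) × ℝ → E} (hg : AEStronglyMeasurable g (volume.restrict {θ | 0 < θ.1})) :
    ∫ θ in {θ | 0 < θ.1}, g θ = a ^ 2 • ∫ θ in {θ | 0 < θ.1}, g (paramTransform a b c θ) := by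
  have hS : MeasurableSet {θ : ℝ × (Fin n → ℝ) × ℝ | 0 < θ.1} :=
    measurableSet_lt measurable_const measurable_fst
  have hmap : Measure.map (paramTransform a b c) (volume.restrict {θ | 0 < θ.1})
      = ENNReal.ofReal (a ^ 2)⁻¹ • volume.restrict {θ | 0 < θ.1} := by
    conv_lhs => rw [← preimage_paramTransform_pos ha b c]
    rw [← Measure.restrict_map (measurable_paramTransform a b c) hS,
      map_paramTransform_volume ha.ne', Measure.restrict_smul]
  rw [← integral_map (measurable_paramTransform a b c).aemeasurable
      (hmap ▸ hg.mono_ac Measure.smul_absolutelyContinuous), hmap, integral_smul_measure,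
    ENNReal.toReal_ofReal (by positivity), smul_smul, mul_inv_cancel₀ (by positivity), one_smul]

end ParamTransform

section Posterior

variable (N K P : ℕ) (f_v : (Fin (2*N*P) → ℝ) → ℝ) (H : Matrix (Fin (2*N*P)) (Fin (N+K)) ℝ)

noncomputable def posteriorNumerIntegrand (y : Fin (2*N*P) → ℝ)
    (θ : ℝ × (Fin (N+K) → ℝ) × ℝ) : ℝ :=
  θ.2.2 / θ.1^2 * densFam N K P f_v H y θ * θ.1 ^ (N+K-1)

noncomputable def posteriorDenomIntegrand (y : Fin (2*N*P) → ℝ)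
    (θ : ℝ × (Fin (N+K) → ℝ) × ℝ) : ℝ :=
  1 / θ.1^2 * densFam N K P f_v H y θ * θ.1 ^ (N+K-1)

theorem deltaOpt_eq_div (y : Fin (2*N*P) → ℝ) :
    deltaOpt N K P f_v H y =
      (∫ θ in {θ | 0 < θ.1}, posteriorNumerIntegrand N K P f_v H y θ) /
        ∫ θ in {θ | 0 < θ.1}, posteriorDenomIntegrand N K P f_v H y θ :=
  rfl

variable {a : ℝ} (b : Fin (N+K) → ℝ) (c : ℝ) (y : Fin (2*N*P) → ℝ)

theorem densFam_paramTransform (ha : a ≠ 0) (θ : ℝ × (Fin (N+K) → ℝ) × ℝ) :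
    densFam N K P f_v H (a • (y + H.mulVec b) + c • 1) (paramTransform a b c θ)
      = (a ^ (2*N*P))⁻¹ * densFam N K P f_v H y θ := by
  obtain ⟨φ, γ, δ⟩ := θ
  have harg : (a * φ)⁻¹ • (a • (y + H.mulVec b) + c • 1 - (a * δ + c) • 1)
        - H.mulVec (γ + φ⁻¹ • b)
      = φ⁻¹ • (y - δ • 1) - H.mulVec γ := by
    have hshift : a • (y + H.mulVec b) + c • 1 - (a * δ + c) • 1
        = a • (y - δ • 1 + H.mulVec b) := by
      module
    rw [hshift, Matrix.mulVec_add, Matrix.mulVec_smul, mul_inv, mul_smul, smul_comm a⁻¹,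
      inv_smul_smul₀ ha]
    module
  simp only [densFam, paramTransform]
  rw [harg, mul_pow, mul_inv]
  ring

theorem posteriorNumerIntegrand_paramTransform (ha : a ≠ 0) (θ : ℝ × (Fin (N+K) → ℝ) × ℝ) :
    posteriorNumerIntegrand N K P f_v H (a • (y + H.mulVec b) + c • 1) (paramTransform a b c θ)
      = a ^ (N+K-1) / (a ^ 2 * a ^ (2*N*P)) *
        (a * posteriorNumerIntegrand N K P f_v H y θ
          + c * posteriorDenomIntegrand N K P f_v H y θ) := by
  simp only [posteriorNumerIntegrand, posteriorDenomIntegrand,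
    densFam_paramTransform N K P f_v H b c y ha]
  simp only [paramTransform]
  ring

theorem posteriorDenomIntegrand_paramTransform (ha : a ≠ 0) (θ : ℝ × (Fin (N+K) → ℝ) × ℝ) :
    posteriorDenomIntegrand N K P f_v H (a • (y + H.mulVec b) + c • 1) (paramTransform a b c θ)
      = a ^ (N+K-1) / (a ^ 2 * a ^ (2*N*P)) * posteriorDenomIntegrand N K P f_v H y θ := by
  simp only [posteriorDenomIntegrand, densFam_paramTransform N K P f_v H b c y ha]
  simp only [paramTransform]
  ring

theorem setIntegral_posteriorNumerIntegrand_smul_add (ha : 0 < a)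
    (hmeas : AEStronglyMeasurable
      (posteriorNumerIntegrand N K P f_v H (a • (y + H.mulVec b) + c • 1))
      (volume.restrict {θ | 0 < θ.1}))
    (hnum : IntegrableOn (posteriorNumerIntegrand N K P f_v H y) {θ | 0 < θ.1})
    (hden : IntegrableOn (posteriorDenomIntegrand N K P f_v H y) {θ | 0 < θ.1}) :
    ∫ θ in {θ | 0 < θ.1}, posteriorNumerIntegrand N K P f_v H (a • (y + H.mulVec b) + c • 1) θ
      = a ^ 2 * (a ^ (N+K-1) / (a ^ 2 * a ^ (2*N*P)) *
        (a * (∫ θ in {θ | 0 < θ.1}, posteriorNumerIntegrand N K P f_v H y θ)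
          + c * ∫ θ in {θ | 0 < θ.1}, posteriorDenomIntegrand N K P f_v H y θ)) := by
  rw [setIntegral_pos_eq_sq_smul_comp_paramTransform ha b c hmeas, smul_eq_mul]
  simp only [posteriorNumerIntegrand_paramTransform N K P f_v H b c y ha.ne']
  rw [integral_const_mul, integral_add (hnum.const_mul a) (hden.const_mul c),
    integral_const_mul, integral_const_mul]

theorem setIntegral_posteriorDenomIntegrand_smul_add (ha : 0 < a)
    (hmeas : AEStronglyMeasurable
      (posteriorDenomIntegrand N K P f_v H (a • (y + H.mulVec b) + c • 1))
      (volume.restrict {θ | 0 < θ.1})) :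
    ∫ θ in {θ | 0 < θ.1}, posteriorDenomIntegrand N K P f_v H (a • (y + H.mulVec b) + c • 1) θ
      = a ^ 2 * (a ^ (N+K-1) / (a ^ 2 * a ^ (2*N*P)) *
        ∫ θ in {θ | 0 < θ.1}, posteriorDenomIntegrand N K P f_v H y θ) := by
  rw [setIntegral_pos_eq_sq_smul_comp_paramTransform ha b c hmeas, smul_eq_mul]
  simp only [posteriorDenomIntegrand_paramTransform N K P f_v H b c y ha.ne']
  rw [integral_const_mul]

end Posterior

theorem stmt_17_general (N K P : ℕ) (f_v : (Fin (2*N*P) → ℝ) → ℝ)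
    (H : Matrix (Fin (2*N*P)) (Fin (N+K)) ℝ)
    (hnum : ∀ y : Fin (2*N*P) → ℝ, IntegrableOn
      (fun θ : ℝ × (Fin (N+K) → ℝ) × ℝ =>
        θ.2.2 / θ.1^2 * densFam N K P f_v H y θ * θ.1 ^ (N+K-1))
      {θ : ℝ × (Fin (N+K) → ℝ) × ℝ | 0 < θ.1})
    (hden : ∀ y : Fin (2*N*P) → ℝ, IntegrableOn
      (fun θ : ℝ × (Fin (N+K) → ℝ) × ℝ =>
        1 / θ.1^2 * densFam N K P f_v H y θ * θ.1 ^ (N+K-1))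
      {θ : ℝ × (Fin (N+K) → ℝ) × ℝ | 0 < θ.1})
    (hdenpos : ∀ y : Fin (2*N*P) → ℝ,
      0 < ∫ θ in {θ : ℝ × (Fin (N+K) → ℝ) × ℝ | 0 < θ.1},
            1 / θ.1^2 * densFam N K P f_v H y θ * θ.1 ^ (N+K-1)) :
    ∀ (a : ℝ) (b : Fin (N+K) → ℝ) (c : ℝ), 0 < a → ∀ y : Fin (2*N*P) → ℝ,
      deltaOpt N K P f_v H (a • (y + H.mulVec b) + c • (1 : Fin (2*N*P) → ℝ))
        = a * deltaOpt N K P f_v H y + c := by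
  intro a b c ha y
  have hden_ne : (∫ θ in {θ | 0 < θ.1}, posteriorDenomIntegrand N K P f_v H y θ) ≠ 0 :=
    (hdenpos y).ne'
  rw [deltaOpt_eq_div, deltaOpt_eq_div,
    setIntegral_posteriorNumerIntegrand_smul_add N K P f_v H b c y ha
      (hnum _).aestronglyMeasurable (hnum y) (hden y),
    setIntegral_posteriorDenomIntegrand_smul_add N K P f_v H b c y ha
      (hden _).aestronglyMeasurable]
  field_simp

/-- the posterior-mean estimator `δ̂_opt` is invariant:
`δ̂_opt(a(y + Hb) + c·1) = a δ̂_opt(y) + c` for all `a > 0`, `b`, `c`, provided all the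
integrals are finite and the denominator is positive. -/
theorem stmt_17 (N K P : ℕ) (f_v : (Fin (2*N*P) → ℝ) → ℝ)
    (hfv_nonneg : ∀ x, 0 ≤ f_v x)
    (H : Matrix (Fin (2*N*P)) (Fin (N+K)) ℝ)
    (hnum : ∀ y : Fin (2*N*P) → ℝ, IntegrableOn
      (fun θ : ℝ × (Fin (N+K) → ℝ) × ℝ =>
        θ.2.2 / θ.1^2 * densFam N K P f_v H y θ * θ.1 ^ (N+K-1))
      {θ : ℝ × (Fin (N+K) → ℝ) × ℝ | 0 < θ.1})
    (hden : ∀ y : Fin (2*N*P) → ℝ, IntegrableOn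
      (fun θ : ℝ × (Fin (N+K) → ℝ) × ℝ =>
        1 / θ.1^2 * densFam N K P f_v H y θ * θ.1 ^ (N+K-1))
      {θ : ℝ × (Fin (N+K) → ℝ) × ℝ | 0 < θ.1})
    (hdenpos : ∀ y : Fin (2*N*P) → ℝ,
      0 < ∫ θ in {θ : ℝ × (Fin (N+K) → ℝ) × ℝ | 0 < θ.1},
            1 / θ.1^2 * densFam N K P f_v H y θ * θ.1 ^ (N+K-1)) :
    ∀ (a : ℝ) (b : Fin (N+K) → ℝ) (c : ℝ), 0 < a → ∀ y : Fin (2*N*P) → ℝ,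
      deltaOpt N K P f_v H (a • (y + H.mulVec b) + c • (1 : Fin (2*N*P) → ℝ))
        = a * deltaOpt N K P f_v H y + c :=
  stmt_17_general N K P f_v H hnum hden hdenpos
end

section
/- The posterior-mean skew estimator φ̂_opt(y) = (∫_Θ (1/φ) f(y|θ) π(θ) dθ)/(∫_Θ (1/φ²) f(y|θ) π(θ) dθ), with π(θ) = φ^{N+K−1}, satisfies scale-invariance: φ̂_opt(a(y + Hb) + c·1) = a·φ̂_opt(y) for all a > 0, b ∈ ℝ^{N+K}, c ∈ ℝ, provided all integrals converge and the denominator is positive; moreover φ̂_opt(y) > 0. -/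
open MeasureTheory

/-- The posterior-mean skew estimator
`φ̂_opt(y) = (∫ (1/φ) f(y|θ) π(θ) dθ)/(∫ (1/φ²) f(y|θ) π(θ) dθ)` with
`π(θ) = φ^{N+K-1}`, integrating over `Θ = ℝ⁺ × ℝ^{N+K} × ℝ`. -/
noncomputable def phiOpt (N K P : ℕ) (f_v : (Fin (2*N*P) → ℝ) → ℝ)
    (H : Matrix (Fin (2*N*P)) (Fin (N+K)) ℝ) (y : Fin (2*N*P) → ℝ) : ℝ :=
  (∫ θ in {θ : ℝ × (Fin (N+K) → ℝ) × ℝ | 0 < θ.1},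
      1 / θ.1 * densFam N K P f_v H y θ * θ.1 ^ (N+K-1)) /
  (∫ θ in {θ : ℝ × (Fin (N+K) → ℝ) × ℝ | 0 < θ.1},
      1 / θ.1^2 * densFam N K P f_v H y θ * θ.1 ^ (N+K-1))

lemma my_smul_prod {α β : Type*} [MeasurableSpace α] [MeasurableSpace β]
    (c : ENNReal) (μ : Measure α) (ν : Measure β) [SFinite μ] [SFinite ν] :
    (c • μ).prod ν = c • μ.prod ν := by
  ext s hs
  rw [Measure.prod_apply hs, Measure.smul_apply, Measure.prod_apply hs,
    lintegral_smul_measure, smul_eq_mul]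

lemma my_prod_smul {α β : Type*} [MeasurableSpace α] [MeasurableSpace β]
    (c : ENNReal) (hc : c ≠ ⊤) (μ : Measure α) (ν : Measure β) [SFinite μ] [SFinite ν] :
    μ.prod (c • ν) = c • μ.prod ν := by
  ext s hs
  rw [Measure.prod_apply hs, Measure.smul_apply, Measure.prod_apply hs, smul_eq_mul,
    ← lintegral_const_mul' c _ hc]
  simp

lemma map_affine (a : ℝ) (ha : 0 < a) (c : ℝ) :
    Measure.map (fun x : ℝ => a * x + c) volume
      = ENNReal.ofReal a⁻¹ • volume := by
  have h1 : (fun x : ℝ => a * x + c) = (fun x : ℝ => x + c) ∘ (fun x : ℝ => a * x) := rfl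
  rw [h1, ← Measure.map_map (measurable_add_const c) (measurable_const_mul a)]
  rw [show (fun x : ℝ => a * x) = (a * ·) from rfl, Real.map_volume_mul_left ha.ne',
    Measure.map_smul, map_add_right_eq_self, abs_of_pos (inv_pos.2 ha)]

section
variable (n : ℕ)
abbrev E (n : ℕ) := Fin n → ℝ
abbrev Th (n : ℕ) := ℝ × E n × ℝ

lemma map_T_volume (a : ℝ) (ha : 0 < a) (b : E n) (c : ℝ) :
    Measure.map (fun θ : Th n => (a * θ.1, θ.2.1 + θ.1⁻¹ • b, a * θ.2.2 + c)) volume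
      = ENNReal.ofReal (a⁻¹ * a⁻¹) • volume := by
  set T1 : Th n → Th n := fun θ => (θ.1, θ.2.1 + θ.1⁻¹ • b, θ.2.2) with hT1def
  set T2 : Th n → Th n := fun θ => (a * θ.1, θ.2.1, a * θ.2.2 + c) with hT2def
  have hT1m : Measurable T1 :=
    measurable_fst.prodMk ((measurable_snd.fst.add
      (measurable_fst.inv.smul_const b)).prodMk measurable_snd.snd)
  have hT2m : Measurable T2 :=
    (measurable_fst.const_mul a).prodMk (measurable_snd.fst.prodMk
      ((measurable_snd.snd.const_mul a).add_const c))
  have hT1pres : MeasurePreserving T1 (volume : Measure (Th n)) volume := by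
    rw [Measure.volume_eq_prod]
    have hgm : Measurable (Function.uncurry
        (fun (φ : ℝ) (p : E n × ℝ) => (p.1 + φ⁻¹ • b, p.2))) :=
      (measurable_snd.fst.add (measurable_fst.inv.smul_const b)).prodMk measurable_snd.snd
    have := MeasurePreserving.skew_product (μa := (volume : Measure ℝ))
      (μb := (volume : Measure ℝ)) (μc := (volume : Measure (E n × ℝ)))
      (μd := (volume : Measure (E n × ℝ)))
      (f := id) (g := fun (φ : ℝ) (p : E n × ℝ) => (p.1 + φ⁻¹ • b, p.2))
      (MeasurePreserving.id _) hgm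
      (ae_of_all _ fun φ => by
        have h2 : MeasurePreserving (fun p : E n × ℝ => (p.1 + φ⁻¹ • b, p.2))
            ((volume : Measure (E n)).prod (volume : Measure ℝ))
            ((volume : Measure (E n)).prod (volume : Measure ℝ)) :=
          (measurePreserving_add_right volume (φ⁻¹ • b)).prod (MeasurePreserving.id _)
        rw [← Measure.volume_eq_prod] at h2
        exact h2.map_eq)
    exact this
  have hf1 : Measure.map (fun x : ℝ => a * x) volume = ENNReal.ofReal a⁻¹ • volume := by
    rw [show (fun x : ℝ => a * x) = (a * ·) from rfl, Real.map_volume_mul_left ha.ne',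
      abs_of_pos (inv_pos.2 ha)]
  have hinner : Measure.map (Prod.map (id : E n → E n) (fun x : ℝ => a * x + c))
      (volume : Measure (E n × ℝ)) = ENNReal.ofReal a⁻¹ • volume := by
    rw [Measure.volume_eq_prod, ← Measure.map_prod_map _ _ measurable_id
      (show Measurable (fun x : ℝ => a * x + c) by fun_prop), Measure.map_id, map_affine a ha c,
      my_prod_smul _ ENNReal.ofReal_ne_top, ← Measure.volume_eq_prod]
  have hT2eq : T2 = Prod.map (fun x : ℝ => a * x)
      (Prod.map (id : E n → E n) (fun x : ℝ => a * x + c)) := rfl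
  have hT2map : Measure.map T2 (volume : Measure (Th n))
      = ENNReal.ofReal (a⁻¹ * a⁻¹) • volume := by
    rw [hT2eq, Measure.volume_eq_prod (α := ℝ), ← Measure.map_prod_map _ _
      (show Measurable (fun x : ℝ => a * x) by fun_prop)
      (show Measurable (Prod.map (id : E n → E n) (fun x : ℝ => a * x + c)) by fun_prop),
      hf1, hinner, my_smul_prod, my_prod_smul _ ENNReal.ofReal_ne_top, smul_smul,
      ← ENNReal.ofReal_mul (by positivity), ← Measure.volume_eq_prod]
  have hTcomp : (fun θ : Th n => (a * θ.1, θ.2.1 + θ.1⁻¹ • b, a * θ.2.2 + c))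
      = T2 ∘ T1 := rfl
  rw [hTcomp, ← Measure.map_map hT2m hT1m, hT1pres.map_eq, hT2map]

lemma key_cov (a : ℝ) (ha : 0 < a) (b : E n) (c : ℝ) (F : Th n → ℝ)
    (hF : IntegrableOn F {θ : Th n | 0 < θ.1}) :
    ∫ θ in {θ : Th n | 0 < θ.1}, F (a * θ.1, θ.2.1 + θ.1⁻¹ • b, a * θ.2.2 + c)
      = (a⁻¹ * a⁻¹) * ∫ θ in {θ : Th n | 0 < θ.1}, F θ := by
  set S : Set (Th n) := {θ | 0 < θ.1} with hSdef
  set T : Th n → Th n := fun θ => (a * θ.1, θ.2.1 + θ.1⁻¹ • b, a * θ.2.2 + c) with hTdef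
  have hSm : MeasurableSet S := measurableSet_lt measurable_const measurable_fst
  have hT : Measurable T := by
    apply Measurable.prodMk (measurable_fst.const_mul a)
    exact (measurable_snd.fst.add (measurable_fst.inv.smul_const b)).prodMk
      ((measurable_snd.snd.const_mul a).add_const c)
  have hpre : T ⁻¹' S = S := by
    ext θ
    simp only [hSdef, hTdef, Set.mem_preimage, Set.mem_setOf_eq]
    exact mul_pos_iff_of_pos_left ha
  have hrestrict : Measure.map T (volume.restrict S)
      = ENNReal.ofReal (a⁻¹ * a⁻¹) • volume.restrict S := by
    conv_lhs => rw [← hpre]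
    rw [← Measure.restrict_map hT hSm, hTdef, map_T_volume n a ha b c,
      Measure.restrict_smul]
  have hasm : AEStronglyMeasurable F (Measure.map T (volume.restrict S)) := by
    rw [hrestrict]
    exact hF.aestronglyMeasurable.mono_ac Measure.smul_absolutelyContinuous
  calc ∫ θ in S, F (T θ) = ∫ x, F x ∂(Measure.map T (volume.restrict S)) :=
        (integral_map hT.aemeasurable hasm).symm
    _ = (a⁻¹ * a⁻¹) * ∫ θ in S, F θ := by
        rw [hrestrict, integral_smul_measure, ENNReal.toReal_ofReal (by positivity),
          smul_eq_mul]
end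

theorem stmt_18 (N K P : ℕ) (f_v : (Fin (2*N*P) → ℝ) → ℝ)
    (hfv_nonneg : ∀ x, 0 ≤ f_v x)
    (H : Matrix (Fin (2*N*P)) (Fin (N+K)) ℝ)
    (hnum : ∀ y : Fin (2*N*P) → ℝ, IntegrableOn
      (fun θ : ℝ × (Fin (N+K) → ℝ) × ℝ =>
        1 / θ.1 * densFam N K P f_v H y θ * θ.1 ^ (N+K-1))
      {θ : ℝ × (Fin (N+K) → ℝ) × ℝ | 0 < θ.1})
    (hden : ∀ y : Fin (2*N*P) → ℝ, IntegrableOn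
      (fun θ : ℝ × (Fin (N+K) → ℝ) × ℝ =>
        1 / θ.1^2 * densFam N K P f_v H y θ * θ.1 ^ (N+K-1))
      {θ : ℝ × (Fin (N+K) → ℝ) × ℝ | 0 < θ.1})
    (hdenpos : ∀ y : Fin (2*N*P) → ℝ,
      0 < ∫ θ in {θ : ℝ × (Fin (N+K) → ℝ) × ℝ | 0 < θ.1},
            1 / θ.1^2 * densFam N K P f_v H y θ * θ.1 ^ (N+K-1)) :
    (∀ (a : ℝ) (b : Fin (N+K) → ℝ) (c : ℝ), 0 < a → ∀ y : Fin (2*N*P) → ℝ,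
      phiOpt N K P f_v H (a • (y + H.mulVec b) + c • (1 : Fin (2*N*P) → ℝ))
        = a * phiOpt N K P f_v H y) ∧
    ∀ y : Fin (2*N*P) → ℝ, 0 < phiOpt N K P f_v H y := by
  have hSm : MeasurableSet {θ : ℝ × (Fin (N+K) → ℝ) × ℝ | 0 < θ.1} :=
    measurableSet_lt measurable_const measurable_fst
  -- nonnegativity of the integrands on S
  have hnn : ∀ (y : Fin (2*N*P) → ℝ) (θ : ℝ × (Fin (N+K) → ℝ) × ℝ), 0 < θ.1 →
      0 ≤ densFam N K P f_v H y θ := by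
    intro y θ hθ
    exact mul_nonneg (inv_nonneg.2 (pow_nonneg hθ.le _)) (hfv_nonneg _)
  -- positivity of the numerator
  have hnumpos : ∀ y : Fin (2*N*P) → ℝ,
      0 < ∫ θ in {θ : ℝ × (Fin (N+K) → ℝ) × ℝ | 0 < θ.1},
            1 / θ.1 * densFam N K P f_v H y θ * θ.1 ^ (N+K-1) := by
    intro y
    have hg0 : ∀ θ ∈ {θ : ℝ × (Fin (N+K) → ℝ) × ℝ | 0 < θ.1},
        0 ≤ 1 / θ.1 * densFam N K P f_v H y θ * θ.1 ^ (N+K-1) := by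
      intro θ hθ
      have hθ1 : (0:ℝ) < θ.1 := hθ
      exact mul_nonneg (mul_nonneg (by positivity) (hnn y θ hθ1)) (pow_nonneg hθ1.le _)
    have hge : 0 ≤ ∫ θ in {θ : ℝ × (Fin (N+K) → ℝ) × ℝ | 0 < θ.1},
        1 / θ.1 * densFam N K P f_v H y θ * θ.1 ^ (N+K-1) :=
      setIntegral_nonneg hSm hg0
    rcases hge.lt_or_eq with h | h
    · exact h
    exfalso
    have hae : 0 ≤ᵐ[volume.restrict {θ : ℝ × (Fin (N+K) → ℝ) × ℝ | 0 < θ.1}]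
        fun θ => 1 / θ.1 * densFam N K P f_v H y θ * θ.1 ^ (N+K-1) :=
      (ae_restrict_iff' hSm).2 (ae_of_all _ hg0)
    have h0 : (fun θ : ℝ × (Fin (N+K) → ℝ) × ℝ =>
        1 / θ.1 * densFam N K P f_v H y θ * θ.1 ^ (N+K-1))
        =ᵐ[volume.restrict {θ : ℝ × (Fin (N+K) → ℝ) × ℝ | 0 < θ.1}] 0 :=
      (integral_eq_zero_iff_of_nonneg_ae hae (hnum y)).1 h.symm
    have hden0 : (fun θ : ℝ × (Fin (N+K) → ℝ) × ℝ =>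
        1 / θ.1^2 * densFam N K P f_v H y θ * θ.1 ^ (N+K-1))
        =ᵐ[volume.restrict {θ : ℝ × (Fin (N+K) → ℝ) × ℝ | 0 < θ.1}] 0 := by
      filter_upwards [h0, ae_restrict_mem hSm] with θ h1 h2
      have hθ1 : (0:ℝ) < θ.1 := h2
      simp only [Pi.zero_apply] at h1 ⊢
      have hsplit : 1 / θ.1^2 * densFam N K P f_v H y θ * θ.1 ^ (N+K-1)
          = 1 / θ.1 * (1 / θ.1 * densFam N K P f_v H y θ * θ.1 ^ (N+K-1)) := by
        ring
      rw [hsplit, h1, mul_zero]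
    have : (∫ θ in {θ : ℝ × (Fin (N+K) → ℝ) × ℝ | 0 < θ.1},
        1 / θ.1^2 * densFam N K P f_v H y θ * θ.1 ^ (N+K-1)) = 0 := by
      rw [integral_congr_ae hden0]
      simp
    linarith [hdenpos y]
  constructor
  · intro a b c ha y
    set y' : Fin (2*N*P) → ℝ := a • (y + H.mulVec b) + c • (1 : Fin (2*N*P) → ℝ) with hy'
    set Cn : ℝ := a ^ (N+K-1) * (a * a ^ (2*N*P))⁻¹ with hCn
    set Cd : ℝ := a ^ (N+K-1) * (a^2 * a ^ (2*N*P))⁻¹ with hCd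
    -- pointwise identity for the transformed integrands
    have hdens : ∀ θ : ℝ × (Fin (N+K) → ℝ) × ℝ, 0 < θ.1 →
        densFam N K P f_v H y' (a * θ.1, θ.2.1 + θ.1⁻¹ • b, a * θ.2.2 + c)
          = (a ^ (2*N*P))⁻¹ * densFam N K P f_v H y θ := by
      intro θ hθ1
      have harg : (a * θ.1)⁻¹ • (y' - (a * θ.2.2 + c) • (1 : Fin (2*N*P) → ℝ))
            - H.mulVec (θ.2.1 + θ.1⁻¹ • b)
          = θ.1⁻¹ • (y - θ.2.2 • (1 : Fin (2*N*P) → ℝ)) - H.mulVec θ.2.1 := by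
        have hb : H.mulVec (θ.2.1 + θ.1⁻¹ • b)
            = H.mulVec θ.2.1 + θ.1⁻¹ • H.mulVec b := by
          rw [Matrix.mulVec_add, Matrix.mulVec_smul]
        funext i
        simp only [hb, hy', Pi.sub_apply, Pi.add_apply, Pi.smul_apply, Pi.one_apply,
          smul_eq_mul]
        field_simp
        ring
      simp only [densFam, harg]
      rw [mul_pow, mul_inv]
      ring
    have hptnum : Set.EqOn
        (fun θ : ℝ × (Fin (N+K) → ℝ) × ℝ =>
          (fun θ : ℝ × (Fin (N+K) → ℝ) × ℝ =>
            1 / θ.1 * densFam N K P f_v H y' θ * θ.1 ^ (N+K-1))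
            (a * θ.1, θ.2.1 + θ.1⁻¹ • b, a * θ.2.2 + c))
        (fun θ : ℝ × (Fin (N+K) → ℝ) × ℝ =>
          Cn * (1 / θ.1 * densFam N K P f_v H y θ * θ.1 ^ (N+K-1)))
        {θ : ℝ × (Fin (N+K) → ℝ) × ℝ | 0 < θ.1} := by
      intro θ hθ
      have hθ1 : (0:ℝ) < θ.1 := hθ
      simp only [hdens θ hθ1, hCn, mul_pow]
      field_simp
    have hptden : Set.EqOn
        (fun θ : ℝ × (Fin (N+K) → ℝ) × ℝ =>
          (fun θ : ℝ × (Fin (N+K) → ℝ) × ℝ =>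
            1 / θ.1^2 * densFam N K P f_v H y' θ * θ.1 ^ (N+K-1))
            (a * θ.1, θ.2.1 + θ.1⁻¹ • b, a * θ.2.2 + c))
        (fun θ : ℝ × (Fin (N+K) → ℝ) × ℝ =>
          Cd * (1 / θ.1^2 * densFam N K P f_v H y θ * θ.1 ^ (N+K-1)))
        {θ : ℝ × (Fin (N+K) → ℝ) × ℝ | 0 < θ.1} := by
      intro θ hθ
      have hθ1 : (0:ℝ) < θ.1 := hθ
      simp only [hdens θ hθ1, hCd, mul_pow]
      field_simp
    have hnum_cov := key_cov (N+K) a ha b c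
      (fun θ : ℝ × (Fin (N+K) → ℝ) × ℝ =>
        1 / θ.1 * densFam N K P f_v H y' θ * θ.1 ^ (N+K-1)) (hnum y')
    have hden_cov := key_cov (N+K) a ha b c
      (fun θ : ℝ × (Fin (N+K) → ℝ) × ℝ =>
        1 / θ.1^2 * densFam N K P f_v H y' θ * θ.1 ^ (N+K-1)) (hden y')
    rw [setIntegral_congr_fun hSm hptnum, integral_const_mul] at hnum_cov
    rw [setIntegral_congr_fun hSm hptden, integral_const_mul] at hden_cov
    -- abbreviations
    set In := ∫ θ in {θ : ℝ × (Fin (N+K) → ℝ) × ℝ | 0 < θ.1},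
        1 / θ.1 * densFam N K P f_v H y θ * θ.1 ^ (N+K-1) with hIn
    set Id' := ∫ θ in {θ : ℝ × (Fin (N+K) → ℝ) × ℝ | 0 < θ.1},
        1 / θ.1^2 * densFam N K P f_v H y θ * θ.1 ^ (N+K-1) with hId
    set In' := ∫ θ in {θ : ℝ × (Fin (N+K) → ℝ) × ℝ | 0 < θ.1},
        1 / θ.1 * densFam N K P f_v H y' θ * θ.1 ^ (N+K-1) with hIn'
    set Id'' := ∫ θ in {θ : ℝ × (Fin (N+K) → ℝ) × ℝ | 0 < θ.1},
        1 / θ.1^2 * densFam N K P f_v H y' θ * θ.1 ^ (N+K-1) with hId''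
    have ha0 : a ≠ 0 := ha.ne'
    have hIn'eq : In' = (a * a) * (Cn * In) := by
      have := hnum_cov
      field_simp at this
      linarith
    have hId''eq : Id'' = (a * a) * (Cd * Id') := by
      have := hden_cov
      field_simp at this
      linarith
    have hC : (a * a) * Cn = a * ((a * a) * Cd) := by
      rw [hCn, hCd]
      field_simp
    have hD0 : (a * a) * Cd ≠ 0 := by
      rw [hCd]
      positivity
    have hphi : phiOpt N K P f_v H y' = In' / Id'' := rfl
    have hphiy : phiOpt N K P f_v H y = In / Id' := rfl
    have hDen0 : Id' ≠ 0 := ne_of_gt (hdenpos y)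
    rw [hphi, hphiy, hIn'eq, hId''eq, hCn, hCd]
    have hpow1 : (a : ℝ) ^ (2*N*P) ≠ 0 := pow_ne_zero _ ha0
    have hpow2 : (a : ℝ) ^ (N+K-1) ≠ 0 := pow_ne_zero _ ha0
    field_simp
  · intro y
    exact div_pos (hnumpos y) (hdenpos y)
end
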